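/- arXiv:2309.02847 — 2 statements merged into one kernel-verified Lean document; each statement's English description precedes it below -/
import Mathlib

section
/- Let d_0 > 0, t ∈ (0, π), and define d_t by sinh(d_t) = cos(t/2) sinh(d_0). Then there exists a constant C_2 > 0 (depending on d_0) such that d_t ≤ d_0 − C_2 t² for all sufficiently small t > 0. -/
open Real

lemma sinh_le_two_mul_aux {s : ℝ} (h0 : 0 ≤ s) (h1 : s ≤ 1) : Real.sinh s ≤ 2 * s := by
  rw [Real.sinh_eq]
  have h2 : 1 - s ≤ Real.exp (-s) := by
    have := Real.add_one_le_exp (-s); linarith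
  have h3 : (1 - s) * Real.exp s ≤ 1 := by
    have := Real.add_one_le_exp (-s)
    have h4 : Real.exp (-s) * Real.exp s = 1 := by
      rw [← Real.exp_add]; simp
    nlinarith [Real.exp_pos s]
  have h5 : Real.exp s ≤ Real.exp 1 := Real.exp_le_exp.mpr h1
  have h6 : Real.exp 1 ≤ 3 := by
    have := Real.exp_one_lt_d9; linarith
  nlinarith [Real.exp_pos s]

/-- Let `d₀ > 0` and for `t ∈ (0, π)` let `d t` be defined by
`sinh (d t) = cos (t/2) · sinh d₀` (with `d t ≥ 0`).  Then there is a constant `C₂ > 0`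
such that `d t ≤ d₀ − C₂ t²` for all sufficiently small `t > 0`. -/
theorem stmt12 (d₀ : ℝ) (hd₀ : 0 < d₀) (d : ℝ → ℝ)
    (hd : ∀ t ∈ Set.Ioo (0 : ℝ) π, Real.sinh (d t) = Real.cos (t / 2) * Real.sinh d₀) :
    ∃ C₂ > 0, ∃ t₀ > 0, ∀ t, 0 < t → t < t₀ → d t ≤ d₀ - C₂ * t ^ 2 := by
  have hpi := Real.pi_gt_three
  have hsinh : 0 < Real.sinh d₀ := Real.sinh_pos_iff.mpr hd₀
  have hcosh : 0 < Real.cosh d₀ := Real.cosh_pos d₀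
  have hsc : Real.sinh d₀ < Real.cosh d₀ := Real.sinh_lt_cosh d₀
  set C : ℝ := Real.sinh d₀ / (4 * π ^ 2 * Real.cosh d₀) with hC
  have hπ2 : (0:ℝ) < π ^ 2 := by positivity
  have hCpos : 0 < C := by positivity
  have hClt1 : C < 1 := by
    rw [hC, div_lt_one (by positivity)]
    have h9 : (9:ℝ) < π ^ 2 := by nlinarith
    nlinarith [hsc, hcosh, h9]
  refine ⟨C, hCpos, 1, one_pos, fun t ht ht1 => ?_⟩
  have htπ : t < π := by linarith
  have heq := hd t ⟨ht, htπ⟩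
  set s : ℝ := C * t ^ 2 with hs
  have hspos : 0 < s := by positivity
  have hs1 : s ≤ 1 := by nlinarith
  -- key: cos(t/2) * sinh d₀ ≤ sinh (d₀ - s)
  have hcosb : Real.cos (t / 2) ≤ 1 - 2 / π ^ 2 * (t / 2) ^ 2 := by
    apply Real.cos_le_one_sub_mul_cos_sq
    rw [abs_of_pos (by linarith)]
    linarith
  have hsinhs : Real.sinh s ≤ 2 * s := sinh_le_two_mul_aux hspos.le hs1
  have hcoshs : 1 ≤ Real.cosh s := Real.one_le_cosh s
  have hkey : Real.cos (t / 2) * Real.sinh d₀ ≤ Real.sinh (d₀ - s) := by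
    rw [Real.sinh_sub]
    have h1 : Real.cosh d₀ * Real.sinh s ≤ Real.cosh d₀ * (2 * s) := by
      apply mul_le_mul_of_nonneg_left hsinhs hcosh.le
    have h2 : Real.cosh d₀ * (2 * s) = Real.sinh d₀ * (t ^ 2 / (2 * π ^ 2)) := by
      rw [hs, hC]; field_simp; ring
    have h3 : Real.cos (t / 2) * Real.sinh d₀ ≤
        (1 - t ^ 2 / (2 * π ^ 2)) * Real.sinh d₀ := by
      apply mul_le_mul_of_nonneg_right _ hsinh.le
      have : 2 / π ^ 2 * (t / 2) ^ 2 = t ^ 2 / (2 * π ^ 2) := by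
        field_simp
      linarith [hcosb, this ▸ hcosb]
    nlinarith
  have := heq ▸ hkey
  have hle : d t ≤ d₀ - s := Real.sinh_le_sinh.mp this
  linarith [hle]
end

section
/- Let d_0 > 0 and for small t > 0 let d_t satisfy sinh(d_t) = cos(t/2) sinh(d_0). Then there exists C_3 > 0 (depending on d_0) such that 1 − tanh(d_t)·coth(d_0) ≥ C_3 t² for all sufficiently small t > 0. -/
/-!
Write `c = cos (t/2)`. Since `sinh d_t = c sinh d₀`, we get `tanh d_t coth d₀ = c cosh d₀ / cosh d_t`,
and `cosh² d_t - c² cosh² d₀ = 1 - c² = sin² (t/2)`. Hence `1 - c cosh d₀ / cosh d_t` is at least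
`sin² (t/2) / (2 cosh² d₀)`, and Jordan's inequality `sin (t/2) ≥ t/π` gives the quadratic lower bound
for every `t ∈ (0, π)`.
-/

open Real

lemma sq_sub_sq_div_two_mul_sq_le_one_sub_div {a b : ℝ} (ha : 0 ≤ a) (hab : a ≤ b) (hb : 0 < b) :
    (b ^ 2 - a ^ 2) / (2 * b ^ 2) ≤ 1 - a / b := by
  have hsplit : 1 - a / b = (b ^ 2 - a ^ 2) / (b * (b + a)) := by
    field_simp
    ring
  rw [hsplit]
  apply div_le_div_of_nonneg_left (by nlinarith) (by positivity)
  nlinarith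

lemma Real.tanh_mul_coth_of_sinh_eq {x y c : ℝ} (hy : y ≠ 0) (h : sinh x = c * sinh y) :
    tanh x * (cosh y / sinh y) = c * cosh y / cosh x := by
  have := sinh_ne_zero.mpr hy
  have := (cosh_pos x).ne'
  rw [tanh_eq_sinh_div_cosh, h]
  field_simp

lemma Real.one_sub_sq_div_le_one_sub_tanh_mul_coth {x y c : ℝ} (hy : y ≠ 0) (hc₀ : 0 ≤ c)
    (hc₁ : c ≤ 1) (h : sinh x = c * sinh y) :
    (1 - c ^ 2) / (2 * cosh y ^ 2) ≤ 1 - tanh x * (cosh y / sinh y) := by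
  have hx : cosh x ^ 2 = c ^ 2 * sinh y ^ 2 + 1 := by rw [cosh_sq, h]; ring
  have hdiff : cosh x ^ 2 - (c * cosh y) ^ 2 = 1 - c ^ 2 := by rw [hx, mul_pow, cosh_sq]; ring
  have hcx : cosh x ≤ cosh y :=
    (pow_le_pow_iff_left₀ (cosh_pos x).le (cosh_pos y).le two_ne_zero).1 (by
      rw [hx, cosh_sq]
      nlinarith [mul_le_mul_of_nonneg_right (pow_le_one₀ hc₀ hc₁ (n := 2)) (sq_nonneg (sinh y))])
  have hle : c * cosh y ≤ cosh x :=
    (pow_le_pow_iff_left₀ (by positivity) (cosh_pos x).le two_ne_zero).1 (by nlinarith)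
  rw [tanh_mul_coth_of_sinh_eq hy h, ← hdiff]
  calc (cosh x ^ 2 - (c * cosh y) ^ 2) / (2 * cosh y ^ 2)
      ≤ (cosh x ^ 2 - (c * cosh y) ^ 2) / (2 * cosh x ^ 2) := by
        gcongr
        nlinarith
    _ ≤ 1 - c * cosh y / cosh x :=
        sq_sub_sq_div_two_mul_sq_le_one_sub_div (by positivity) hle (cosh_pos x)

lemma Real.sq_div_pi_sq_le_sin_half_sq {t : ℝ} (ht₀ : 0 ≤ t) (htπ : t ≤ π) :
    t ^ 2 / π ^ 2 ≤ sin (t / 2) ^ 2 := by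
  have hjordan := mul_le_sin (x := t / 2) (by positivity) (by linarith)
  calc t ^ 2 / π ^ 2 = (2 / π * (t / 2)) ^ 2 := by field_simp
    _ ≤ sin (t / 2) ^ 2 := pow_le_pow_left₀ (by positivity) hjordan 2

/-- Let `d₀ > 0` and for small `t > 0` let `d t` satisfy `sinh (d t) = cos (t/2) · sinh d₀`.
Then there exists `C₃ > 0` such that `1 − tanh (d t) · coth d₀ ≥ C₃ t²` for all
sufficiently small `t > 0`.  (Here `coth d₀ = cosh d₀ / sinh d₀`.) -/
theorem stmt13 (d₀ : ℝ) (hd₀ : 0 < d₀) (d : ℝ → ℝ)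
    (hd : ∀ t ∈ Set.Ioo (0 : ℝ) π, Real.sinh (d t) = Real.cos (t / 2) * Real.sinh d₀) :
    ∃ C₃ > 0, ∃ t₀ > 0, ∀ t, 0 < t → t < t₀ →
      C₃ * t ^ 2 ≤ 1 - Real.tanh (d t) * (Real.cosh d₀ / Real.sinh d₀) := by
  refine ⟨1 / (2 * π ^ 2 * cosh d₀ ^ 2), by positivity, π, pi_pos, fun t ht₀ htπ ↦ ?_⟩
  have hc₀ : 0 ≤ cos (t / 2) := cos_nonneg_of_mem_Icc ⟨by linarith, by linarith⟩
  have hbound := one_sub_sq_div_le_one_sub_tanh_mul_coth hd₀.ne' hc₀ (cos_le_one _)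
    (hd t ⟨ht₀, htπ⟩)
  rw [← sin_sq] at hbound
  calc 1 / (2 * π ^ 2 * cosh d₀ ^ 2) * t ^ 2 = t ^ 2 / π ^ 2 / (2 * cosh d₀ ^ 2) := by ring
    _ ≤ sin (t / 2) ^ 2 / (2 * cosh d₀ ^ 2) := by
        gcongr
        exact sq_div_pi_sq_le_sin_half_sq ht₀.le htπ.le
    _ ≤ _ := hbound
end
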